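/- Let (e_j) satisfy e_{j+1} ≤ (1 − 2α_j λ) e_j + α_j² U² for all j ≥ 0, with λ > 0, U > 0 and step size α_j = 1/(2λ(j+1)). Then e_N ≤ e_0/(N+1) + (U²/(4λ²)) · (log N + 2)/(N+1) for all N ≥ 1. -/

import Mathlib

/-!
With `α j = 1 / (2λ(j+1))` the recursion becomes `(j+1) e_{j+1} ≤ j e_j + C/(j+1)` with
`C = U²/(4λ²)`, so `j e_j` telescopes to `N e_N ≤ C H_N`, where `H_N` is the harmonic number.
The bounds `H_N ≤ 1 + log N ≤ N` then give `(N+1) e_N ≤ C (log N + 2)`.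
-/

open Real

theorem natCast_mul_le_mul_harmonic {e : ℕ → ℝ} {C : ℝ}
    (h : ∀ n : ℕ, ((n : ℝ) + 1) * e (n + 1) ≤ n * e n + C / ((n : ℝ) + 1)) (N : ℕ) :
    (N : ℝ) * e N ≤ C * harmonic N := by
  induction N with
  | zero => simp
  | succ n ih =>
    calc ((n + 1 : ℕ) : ℝ) * e (n + 1) ≤ n * e n + C / ((n : ℝ) + 1) := by
          push_cast; exact h n
      _ ≤ C * harmonic n + C / ((n : ℝ) + 1) := by gcongr
      _ = C * harmonic (n + 1) := by
          rw [harmonic_succ]; push_cast; ring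

theorem succ_mul_harmonic_le (N : ℕ) : ((N : ℝ) + 1) * harmonic N ≤ N * (log N + 2) := by
  rcases N.eq_zero_or_pos with rfl | hN
  · simp
  have hN' : (0 : ℝ) < N := by exact_mod_cast hN
  have hH : (harmonic N : ℝ) ≤ 1 + log N := harmonic_le_one_add_log N
  have hlog : log N ≤ N - 1 := log_le_sub_one_of_pos hN'
  nlinarith

theorem succ_mul_le_of_recursion_step {lam U a x y : ℝ} (hlam : lam ≠ 0) (n : ℕ)
    (ha : a = 1 / (2 * lam * ((n : ℝ) + 1)))
    (hy : y ≤ (1 - 2 * a * lam) * x + a ^ 2 * U ^ 2) :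
    ((n : ℝ) + 1) * y ≤ n * x + U ^ 2 / (4 * lam ^ 2) / ((n : ℝ) + 1) := by
  have hn : (0 : ℝ) < (n : ℝ) + 1 := by positivity
  calc ((n : ℝ) + 1) * y ≤ ((n : ℝ) + 1) * ((1 - 2 * a * lam) * x + a ^ 2 * U ^ 2) := by gcongr
    _ = n * x + U ^ 2 / (4 * lam ^ 2) / ((n : ℝ) + 1) := by
        rw [ha]; field_simp; ring

theorem stmt_3_general (e : ℕ → ℝ) (lam U : ℝ) (hlam : 0 < lam)
    (he : ∀ j, 0 ≤ e j)
    (α : ℕ → ℝ) (hα : ∀ j : ℕ, α j = 1 / (2 * lam * ((j : ℝ) + 1)))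
    (hrec : ∀ j : ℕ, e (j + 1) ≤ (1 - 2 * α j * lam) * e j + (α j) ^ 2 * U ^ 2) :
    ∀ N : ℕ, 1 ≤ N →
      e N ≤ e 0 / ((N : ℝ) + 1) + (U ^ 2 / (4 * lam ^ 2)) * (Real.log N + 2) / ((N : ℝ) + 1) := by
  intro N hN
  set C := U ^ 2 / (4 * lam ^ 2)
  have hC : 0 ≤ C := by positivity
  have hN' : (0 : ℝ) < N := by exact_mod_cast hN
  have htelescope : (N : ℝ) * e N ≤ C * harmonic N := natCast_mul_le_mul_harmonic
    (fun n ↦ succ_mul_le_of_recursion_step hlam.ne' n (hα n) (hrec n)) N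
  have hbound : ((N : ℝ) + 1) * e N ≤ C * (log N + 2) := by
    refine le_of_mul_le_mul_left ?_ hN'
    calc (N : ℝ) * (((N : ℝ) + 1) * e N) = ((N : ℝ) + 1) * ((N : ℝ) * e N) := by ring
      _ ≤ ((N : ℝ) + 1) * (C * harmonic N) := by gcongr
      _ = C * (((N : ℝ) + 1) * harmonic N) := by ring
      _ ≤ C * (N * (log N + 2)) := mul_le_mul_of_nonneg_left (succ_mul_harmonic_le N) hC
      _ = N * (C * (log N + 2)) := by ring
  rw [← add_div, le_div_iff₀ (by positivity)]
  linarith [he 0]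

theorem stmt_3 (e : ℕ → ℝ) (lam U : ℝ) (hlam : 0 < lam) (hU : 0 < U)
    (he : ∀ j, 0 ≤ e j)
    (α : ℕ → ℝ) (hα : ∀ j : ℕ, α j = 1 / (2 * lam * ((j : ℝ) + 1)))
    (hrec : ∀ j : ℕ, e (j + 1) ≤ (1 - 2 * α j * lam) * e j + (α j) ^ 2 * U ^ 2) :
    ∀ N : ℕ, 1 ≤ N →
      e N ≤ e 0 / ((N : ℝ) + 1) + (U ^ 2 / (4 * lam ^ 2)) * (Real.log N + 2) / ((N : ℝ) + 1) :=
  stmt_3_general e lam U hlam he α hα hrec
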